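/- Let G be a graph containing an even cycle B and an odd cycle D meeting in exactly one vertex u. If there is a path in G between B−u and D−u, internally disjoint from B and D, whose endpoint on B is quasi-diagonal with u in B, then G contains two cycles of consecutive even lengths. -/

import Mathlib

open SimpleGraph

/-- `G` contains two cycles of consecutive even lengths `2m` and `2m+2`. -/
def HasTwoConsecEvenCycles {V : Type*} (G : SimpleGraph V) : Prop :=
  ∃ (u v : V) (c₁ : G.Walk u u) (c₂ : G.Walk v v) (m : ℕ),
    c₁.IsCycle ∧ c₂.IsCycle ∧ 0 < m ∧ c₁.length = 2 * m ∧ c₂.length = 2 * m + 2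

/-- `G` is `k`-connected: more than `k` vertices, and deleting any set of
fewer than `k` vertices leaves a connected graph. -/
def KConnected {V : Type*} (k : ℕ) (G : SimpleGraph V) : Prop :=
  k + 1 ≤ Nat.card V ∧ ∀ S : Set V, S.ncard < k → (G.induce Sᶜ).Connected

/-- Vertices `a` and `b` of the even cycle `c` are quasi-diagonal:
one of the two arcs of `c` between them has length `ℓ(c)/2 - 1`
(equivalently, the other has length `ℓ(c)/2 + 1`). -/
def QuasiDiagonal {V : Type*} [DecidableEq V] {G : SimpleGraph V} {x : V}
    (c : G.Walk x x) (a b : V) : Prop :=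
  ∃ (ha : a ∈ c.support) (hb : b ∈ (c.rotate a ha).support),
    ((c.rotate a ha).takeUntil b hb).length = c.length / 2 - 1 ∨
    ((c.rotate a ha).takeUntil b hb).length = c.length / 2 + 1

/-!
Since `ℓ(B) = 2m` and `a` is quasi-diagonal with `u`, the vertices `u` and `a` cut `B` into two
paths of lengths `m - 1` and `m + 1`. The vertices `w` and `u` cut the odd cycle `D` into two
paths of different parities, so one of them, `R`, makes `(m - 1) + ℓ(p) + ℓ(R)` even. Closing `p`
with `R` and either path of `B` yields two cycles, of even lengths differing by two.
-/

namespace SimpleGraph.Walk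

variable {V : Type*} {G : SimpleGraph V}

lemma IsPath.start_notMem_support_tail {u v : V} {p : G.Walk u v} (hp : p.IsPath) :
    u ∉ p.support.tail :=
  (List.nodup_cons.mp (p.cons_tail_support.symm ▸ hp.support_nodup)).1

lemma IsPath.append_of_forall_mem {u v w : V} {p : G.Walk u v} {q : G.Walk v w}
    (hp : p.IsPath) (hq : q.IsPath) (h : ∀ x ∈ p.support, x ∈ q.support → x = v) :
    (p.append q).IsPath := by
  refine IsPath.mk' ?_
  rw [support_append, List.nodup_append']
  refine ⟨hp.support_nodup, hq.support_nodup.tail, fun x hxp hxq => ?_⟩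
  obtain rfl := h x hxp (List.mem_of_mem_tail hxq)
  exact hq.start_notMem_support_tail hxq

lemma isCycle_append_append {u a w : V} {A : G.Walk u a} {p : G.Walk a w} {R : G.Walk w u}
    (hA : A.IsPath) (hp : p.IsPath) (hR : R.IsPath) (hua : u ≠ a)
    (hAp : ∀ x ∈ A.support, x ∈ p.support → x = a)
    (hAR : ∀ x ∈ A.support, x ∈ R.support → x = u)
    (hpR : ∀ x ∈ p.support, x ∈ R.support → x = w) :
    ((A.append p).append R).IsCycle := by
  have haw : a ≠ w := fun h => hua (hAR a A.end_mem_support (h ▸ R.start_mem_support)).symm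
  refine (hA.append_of_forall_mem hp hAp).isCycle_append hR (fun x hx hxR => ?_) (.inl ?_)
  · have hxR' := List.mem_of_mem_tail hxR
    rw [tail_support_append, List.mem_append] at hx
    rcases hx with hx | hx
    · obtain rfl := hAR x (List.mem_of_mem_tail hx) hxR'
      exact hA.start_notMem_support_tail hx
    · obtain rfl := hpR x (List.mem_of_mem_tail hx) hxR'
      exact hR.start_notMem_support_tail hxR
  · have hA1 := not_nil_iff_lt_length.mp (not_nil_of_ne (p := A) hua)
    have hp1 := not_nil_iff_lt_length.mp (not_nil_of_ne (p := p) haw)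
    rw [length_append]
    omega

variable [DecidableEq V]

lemma length_takeUntil_add_length_dropUntil {u v w : V} (p : G.Walk u v) (h : w ∈ p.support) :
    (p.takeUntil w h).length + (p.dropUntil w h).length = p.length := by
  rw [← length_append, take_spec]

lemma IsCycle.isPath_dropUntil {v w : V} {c : G.Walk v v} (hc : c.IsCycle) (h : w ∈ c.support)
    (hwv : w ≠ v) : (c.dropUntil w h).IsPath := by
  rw [← take_spec c h] at hc
  exact hc.isPath_of_append_right (not_nil_of_ne hwv.symm)

lemma IsCycle.exists_isPath_even_add_length {v w : V} {c : G.Walk v v} (hc : c.IsCycle)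
    (hodd : Odd c.length) (hw : w ∈ c.support) (hwv : w ≠ v) (n : ℕ) :
    ∃ R : G.Walk w v, R.IsPath ∧ R.support ⊆ c.support ∧ Even (n + R.length) := by
  rcases Nat.even_or_odd (n + (c.dropUntil w hw).length) with he | ho
  · exact ⟨_, hc.isPath_dropUntil hw hwv, c.support_dropUntil_subset_support hw, he⟩
  · refine ⟨(c.takeUntil w hw).reverse, (hc.isPath_takeUntil hw).reverse, ?_, ?_⟩
    · rw [support_reverse]
      exact List.reverse_subset.mpr (c.support_takeUntil_subset_support hw)
    · have hsum := c.length_takeUntil_add_length_dropUntil hw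
      rw [length_reverse, Nat.even_iff]
      rw [Nat.odd_iff] at ho hodd
      omega

end SimpleGraph.Walk

open SimpleGraph.Walk

lemma QuasiDiagonal.exists_isPath_length_add_two {V : Type*} [DecidableEq V] {G : SimpleGraph V}
    {x a u : V} {c : G.Walk x x} (hc : c.IsCycle) (heven : Even c.length) (hau : a ≠ u)
    (hqd : QuasiDiagonal c a u) :
    ∃ P Q : G.Walk u a, P.IsPath ∧ Q.IsPath ∧ P.support ⊆ c.support ∧ Q.support ⊆ c.support ∧
      Q.length = P.length + 2 := by
  obtain ⟨ha, hu, hlen⟩ := hqd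
  have hc' : (c.rotate a ha).IsCycle := hc.rotate ha
  have hsub : (c.rotate a ha).support ⊆ c.support := fun y hy =>
    (mem_support_rotate_iff c a ha).mp hy
  have hT : ((c.rotate a ha).takeUntil u hu).reverse.IsPath := (hc'.isPath_takeUntil hu).reverse
  have hTsub : ((c.rotate a ha).takeUntil u hu).reverse.support ⊆ c.support := by
    rw [support_reverse, List.reverse_subset]
    exact fun y hy => hsub (support_takeUntil_subset_support _ hu hy)
  have hD : ((c.rotate a ha).dropUntil u hu).IsPath := hc'.isPath_dropUntil hu hau.symm
  have hDsub : ((c.rotate a ha).dropUntil u hu).support ⊆ c.support :=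
    fun y hy => hsub (support_dropUntil_subset_support _ hu hy)
  have hsum := (c.rotate a ha).length_takeUntil_add_length_dropUntil hu
  rw [length_rotate] at hsum
  have h3 := hc.three_le_length
  obtain ⟨m, hm⟩ := heven
  rcases hlen with h | h
  · exact ⟨_, _, hT, hD, hTsub, hDsub, by rw [length_reverse]; omega⟩
  · exact ⟨_, _, hD, hT, hDsub, hTsub, by rw [length_reverse]; omega⟩

/-- If an even cycle `B` and an odd cycle `D` meet in exactly one vertex `u`, and there
is a path from `B - u` to `D - u` internally disjoint from both whose endpoint on `B`
is quasi-diagonal with `u`, then `G` has two cycles of consecutive even lengths. -/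
theorem stmt_6 {V : Type*} [DecidableEq V] (G : SimpleGraph V) {u a w : V}
    (b : G.Walk u u) (d : G.Walk u u) (hb : b.IsCycle) (hd : d.IsCycle)
    (hbe : Even b.length) (hdo : Odd d.length)
    (hmeet : ∀ v, v ∈ b.support → v ∈ d.support → v = u)
    (p : G.Walk a w) (hp : p.IsPath)
    (ha : a ∈ b.support) (hau : a ≠ u) (hw : w ∈ d.support) (hwu : w ≠ u)
    (hi : ∀ v ∈ p.support, v ≠ a → v ≠ w → v ∉ b.support ∧ v ∉ d.support)
    (hqd : QuasiDiagonal b a u) :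
    HasTwoConsecEvenCycles G := by
  obtain ⟨A₁, A₂, hA₁, hA₂, hA₁b, hA₂b, hlen⟩ := hqd.exists_isPath_length_add_two hb hbe hau
  obtain ⟨R, hR, hRd, ⟨k, hk⟩⟩ := hd.exists_isPath_even_add_length hdo hw hwu (A₁.length + p.length)
  have hcycle (A : G.Walk u a) (hA : A.IsPath) (hAb : A.support ⊆ b.support) :
      ((A.append p).append R).IsCycle := by
    refine isCycle_append_append hA hp hR hau.symm (fun x hxA hxp => ?_) (fun x hxA hxR => ?_)
      (fun x hxp hxR => ?_)
    · by_contra hxa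
      by_cases hxw : x = w
      · exact hwu (hmeet w (hxw ▸ hAb hxA) hw)
      · exact (hi x hxp hxa hxw).1 (hAb hxA)
    · exact hmeet x (hAb hxA) (hRd hxR)
    · by_contra hxw
      by_cases hxa : x = a
      · exact hau (hmeet a ha (hxa ▸ hRd hxR))
      · exact (hi x hxp hxa hxw).2 (hRd hxR)
  have h₁ := hcycle A₁ hA₁ hA₁b
  have h3 := h₁.three_le_length
  simp only [length_append] at h3
  refine ⟨u, u, _, _, k, h₁, hcycle A₂ hA₂ hA₂b, by omega, ?_, ?_⟩ <;>
    simp only [length_append] <;> omega
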